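/- arXiv:math/0412362 — 7 statements merged into one kernel-verified Lean document; each statement's English description precedes it below -/
import Mathlib

section
/- Let ℓ ∈ (0, 1/2), w ∈ (0, 1/2), and let Q(f) be the probability that the bold-play Markov chain started at f eventually hits 1, where the chain moves from f to f + min{ℓ,f,1−f} with probability w and to f − min{ℓ,f,1−f} with probability 1−w. Then for all integers n ≥ 0, Q(1 − 2^{−n}ℓ) = 1 − (1−w)^n (1 − Q(1−ℓ)). -/
noncomputable def boldStake (ℓ f : ℝ) : ℝ := min ℓ (min f (1 - f))

/-- Lemma 1 of the paper: `Q(1 - 2⁻ⁿ ℓ) = 1 - (1-w)ⁿ (1 - Q(1-ℓ))`, where `Q` is the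
probability of eventually reaching fortune 1 under bold play, characterized here by
the one-step recursion and `Q 1 = 1`. -/
theorem stmt_4 (ℓ w : ℝ) (hℓ0 : 0 < ℓ) (hℓ : ℓ < 1/2) (hw0 : 0 < w) (hw : w < 1/2)
    (Q : ℝ → ℝ) (hQ1 : Q 1 = 1)
    (hrec : ∀ g ∈ Set.Ioo (0:ℝ) 1,
      Q g = w * Q (g + boldStake ℓ g) + (1 - w) * Q (g - boldStake ℓ g)) :
    ∀ n : ℕ, Q (1 - ℓ / 2 ^ n) = 1 - (1 - w) ^ n * (1 - Q (1 - ℓ)) := by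
  intro n
  induction n with
  | zero => simp
  | succ n ih =>
    set ε : ℝ := ℓ / 2 ^ (n + 1) with hε
    have h2 : (2:ℝ) ≤ 2 ^ (n + 1) := by
      calc (2:ℝ) = 2 ^ 1 := (pow_one 2).symm
      _ ≤ 2 ^ (n + 1) := by
        apply pow_le_pow_right₀ (by norm_num) (by omega)
    have h2p : (0:ℝ) < 2 ^ (n + 1) := by positivity
    have hε0 : 0 < ε := by positivity
    have hεle : ε ≤ ℓ := by
      rw [hε, div_le_iff₀ h2p]; nlinarith
    have hεsmall : ε < 1/2 := lt_of_le_of_lt hεle hℓ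
    have hg : (1 - ε) ∈ Set.Ioo (0:ℝ) 1 := by
      constructor <;> [linarith; linarith]
    have hstake : boldStake ℓ (1 - ε) = ε := by
      unfold boldStake
      rw [show (1 : ℝ) - (1 - ε) = ε by ring]
      rw [min_eq_right (show ε ≤ 1 - ε by linarith), min_eq_right hεle]
    have hdouble : 1 - ε - ε = 1 - ℓ / 2 ^ n := by
      rw [hε]; field_simp; ring
    have := hrec (1 - ε) hg
    rw [hstake] at this
    rw [show (1 - ε + ε : ℝ) = 1 by ring, hdouble, hQ1, ih] at this
    rw [this]; ring
end

section
/- Let 0 < w < 1/2 and define g(x) = w(1+x)^{−log₂(1−w)} + (1−w)(1−x)^{−log₂(1−w)} for x ∈ [−1, 1]. Then for all x ∈ (0,1), g′(x) ≤ (−log₂(1−w))(2w − 1) < 0. -/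
open Real

/-- For `0 < w < 1/2` and `g(x) = w(1+x)^{-log₂(1-w)} + (1-w)(1-x)^{-log₂(1-w)}`,
for all `x ∈ (0,1)`: `g'(x) ≤ (-log₂(1-w))(2w-1) < 0`. -/
theorem stmt_6 (w : ℝ) (hw0 : 0 < w) (hw : w < 1/2) (x : ℝ) (hx0 : 0 < x) (hx1 : x < 1) :
    deriv (fun y : ℝ => w * (1 + y) ^ (-Real.logb 2 (1 - w))
        + (1 - w) * (1 - y) ^ (-Real.logb 2 (1 - w))) x
      ≤ (-Real.logb 2 (1 - w)) * (2 * w - 1) ∧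
    (-Real.logb 2 (1 - w)) * (2 * w - 1) < 0 := by
  set a := -Real.logb 2 (1 - w) with ha
  have hw1 : (0:ℝ) < 1 - w := by linarith
  have hw1' : 1 - w < 1 := by linarith
  have ha0 : 0 < a := by
    have := Real.logb_neg (by norm_num : (1:ℝ) < 2) hw1 hw1'
    simp [ha]; linarith
  have ha1 : a < 1 := by
    have h : (-1:ℝ) < Real.logb 2 (1 - w) := by
      rw [Real.lt_logb_iff_rpow_lt (by norm_num) hw1, Real.rpow_neg_one]
      norm_num; linarith
    simp [ha]; linarith
  have h1x : (0:ℝ) < 1 + x := by linarith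
  have h2x : (0:ℝ) < 1 - x := by linarith
  have d1 : HasDerivAt (fun y : ℝ => (1 + y) ^ a) (1 * a * (1 + x) ^ (a - 1)) x :=
    HasDerivAt.rpow_const ((hasDerivAt_id x).const_add 1) (Or.inl (ne_of_gt h1x))
  have d2 : HasDerivAt (fun y : ℝ => (1 - y) ^ a) ((-1) * a * (1 - x) ^ (a - 1)) x :=
    HasDerivAt.rpow_const ((hasDerivAt_id x).const_sub 1) (Or.inl (ne_of_gt h2x))
  have dg : HasDerivAt (fun y : ℝ => w * (1 + y) ^ a + (1 - w) * (1 - y) ^ a)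
      (w * (1 * a * (1 + x) ^ (a - 1)) + (1 - w) * ((-1) * a * (1 - x) ^ (a - 1))) x :=
    (d1.const_mul w).add (d2.const_mul (1 - w))
  have hb1 : (1 + x) ^ (a - 1) ≤ 1 :=
    Real.rpow_le_one_of_one_le_of_nonpos (by linarith) (by linarith)
  have hb2 : (1:ℝ) ≤ (1 - x) ^ (a - 1) :=
    Real.one_le_rpow_of_pos_of_le_one_of_nonpos h2x (by linarith) (by linarith)
  constructor
  · rw [dg.deriv]
    nlinarith [mul_le_mul_of_nonneg_left hb1 (le_of_lt hw0),
      mul_le_mul_of_nonneg_left hb2 (le_of_lt hw1), ha0.le]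
  · have : 2 * w - 1 < 0 := by linarith
    exact mul_neg_of_pos_of_neg ha0 this
end

section
/- Let 0 < w < 1/2 and g(x) = w(1+x)^{−log₂(1−w)} + (1−w)(1−x)^{−log₂(1−w)}. Then g(0) = 1, g(−1) = 1, and 0 < g(x) < 1 for all x ∈ (0, 1]. -/
open Real

noncomputable def gFun (w x : ℝ) : ℝ :=
  w * (1 + x) ^ (-Real.logb 2 (1 - w)) + (1 - w) * (1 - x) ^ (-Real.logb 2 (1 - w))

/-! The exponent `p = -log₂(1 - w)` lies in `(0, 1)` because `1 - w ∈ (1/2, 1)`. For `x ∈ (0, 1]`,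
strict concavity of `t ↦ t ^ p` bounds `g x` strictly by `(w (1 + x) + (1 - w) (1 - x)) ^ p`,
and the base `1 - (1 - 2w) x` is at most `1`. -/

lemma neg_logb_two_one_sub_pos {w : ℝ} (hw0 : 0 < w) (hw1 : w < 1) :
    0 < -logb 2 (1 - w) :=
  neg_pos.mpr (logb_neg one_lt_two (by linarith) (by linarith))

lemma neg_logb_two_one_sub_lt_one {w : ℝ} (hw : w < 1 / 2) : -logb 2 (1 - w) < 1 := by
  have h : (2 : ℝ) ^ (-1 : ℝ) < 1 - w := by
    rw [rpow_neg_one]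
    linarith
  have := (lt_logb_iff_rpow_lt one_lt_two (by linarith)).mpr h
  linarith

lemma weighted_rpow_lt_one {p w x : ℝ} (hp0 : 0 < p) (hp1 : p < 1) (hw0 : 0 < w)
    (hw : w ≤ 1 / 2) (hx : x ∈ Set.Ioc 0 1) :
    w * (1 + x) ^ p + (1 - w) * (1 - x) ^ p < 1 := by
  obtain ⟨hx0, hx1⟩ := hx
  have hconcave := (strictConcaveOn_rpow hp0 hp1).2
    (Set.mem_Ici.2 (by linarith : (0 : ℝ) ≤ 1 + x)) (Set.mem_Ici.2 (by linarith : (0 : ℝ) ≤ 1 - x))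
    (by linarith : 1 + x ≠ 1 - x) hw0 (by linarith : 0 < 1 - w) (by ring)
  simp only [smul_eq_mul] at hconcave
  have hmean : (w * (1 + x) + (1 - w) * (1 - x)) ^ p ≤ 1 :=
    rpow_le_one (by nlinarith) (by nlinarith) hp0.le
  linarith

lemma gFun_zero (w : ℝ) : gFun w 0 = 1 := by
  simp [gFun]

lemma gFun_neg_one {w : ℝ} (hw0 : 0 < w) (hw1 : w < 1) : gFun w (-1) = 1 := by
  have htwo : (2 : ℝ) ^ (-logb 2 (1 - w)) = (1 - w)⁻¹ := by
    rw [rpow_neg zero_le_two, rpow_logb zero_lt_two (by norm_num) (by linarith)]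
  rw [gFun, show (1 : ℝ) + -1 = 0 by norm_num, show (1 : ℝ) - -1 = 2 by norm_num,
    zero_rpow (neg_logb_two_one_sub_pos hw0 hw1).ne', htwo]
  field_simp [(by linarith : (1 - w) ≠ 0)]
  ring

lemma gFun_pos {w x : ℝ} (hw0 : 0 < w) (hw1 : w < 1) (hx : x ∈ Set.Ioc (-1) 1) :
    0 < gFun w x := by
  obtain ⟨hx0, hx1⟩ := hx
  have hleft : 0 < w * (1 + x) ^ (-logb 2 (1 - w)) := mul_pos hw0 (rpow_pos_of_pos (by linarith) _)
  have hright : 0 ≤ (1 - w) * (1 - x) ^ (-logb 2 (1 - w)) :=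
    mul_nonneg (by linarith) (rpow_nonneg (by linarith) _)
  exact add_pos_of_pos_of_nonneg hleft hright

theorem stmt_7 (w : ℝ) (hw0 : 0 < w) (hw : w < 1/2) :
    gFun w 0 = 1 ∧ gFun w (-1) = 1 ∧
    ∀ x ∈ Set.Ioc (0:ℝ) 1, 0 < gFun w x ∧ gFun w x < 1 := by
  have hw1 : w < 1 := by linarith
  refine ⟨gFun_zero w, gFun_neg_one hw0 hw1, fun x hx => ⟨?_, ?_⟩⟩
  · exact gFun_pos hw0 hw1 ⟨by linarith [hx.1], hx.2⟩
  · exact weighted_rpow_lt_one (neg_logb_two_one_sub_pos hw0 hw1)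
      (neg_logb_two_one_sub_lt_one hw) hw0 hw.le hx
end

section
/- Let ℓ ∈ (0, 1/2) and L = ⌊1 + (1 − 2ℓ)/ℓ⌋. If a gambler starts with fortune f ≤ 1−ℓ and the fortune evolves by f ↦ f − min{ℓ, f, 1−f} (i.e., L consecutive losses under bold play), then after L steps the fortune is at most ℓ. -/
/-- The bold-play loss map. -/
noncomputable def lossMap (ℓ f : ℝ) : ℝ := f - boldStake ℓ f

/-- After `L = ⌊1 + (1-2ℓ)/ℓ⌋` consecutive losses under bold play, a gambler starting
with fortune at most `1 - ℓ` has fortune at most `ℓ`. -/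
theorem stmt_10 (ℓ : ℝ) (hℓ0 : 0 < ℓ) (hℓ : ℓ < 1/2)
    (f : ℝ) (hf0 : 0 ≤ f) (hf1 : f ≤ 1 - ℓ) :
    (lossMap ℓ)^[⌊1 + (1 - 2 * ℓ) / ℓ⌋₊] f ≤ ℓ := by
  have key : ∀ n : ℕ, (lossMap ℓ)^[n] f ≤ 1 - ℓ ∧
      ((lossMap ℓ)^[n] f ≤ ℓ ∨ (lossMap ℓ)^[n] f = f - n * ℓ) := by
    intro n
    induction n with
    | zero => exact ⟨hf1, Or.inr (by simp)⟩
    | succ n ih =>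
      obtain ⟨h1, h2⟩ := ih
      set g := (lossMap ℓ)^[n] f with hg
      rw [Function.iterate_succ_apply', ← hg]
      rcases le_or_gt g ℓ with hle | hgt
      · have hmin : boldStake ℓ g = g := by
          have hg2 : g ≤ 1 - g := by nlinarith
          simp [boldStake, min_eq_right (min_le_of_left_le hle : min g (1-g) ≤ ℓ),
            min_eq_left hg2, min_eq_right hle]
        have : lossMap ℓ g = 0 := by simp [lossMap, hmin]
        rw [this]
        constructor
        · linarith
        · left; linarith
      · rcases h2 with h2 | h2
        · linarith
        · have hmin : boldStake ℓ g = ℓ := by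
            have : ℓ ≤ min g (1 - g) := le_min hgt.le (by linarith)
            simp [boldStake, min_eq_left this]
          have hstep : lossMap ℓ g = g - ℓ := by simp [lossMap, hmin]
          rw [hstep]
          constructor
          · linarith
          · right; rw [h2]; push_cast; ring
  obtain ⟨_, h2⟩ := key ⌊1 + (1 - 2 * ℓ) / ℓ⌋₊
  rcases h2 with h2 | h2
  · exact h2
  · have hfloor : (1 - 2 * ℓ) / ℓ < (⌊1 + (1 - 2 * ℓ) / ℓ⌋₊ : ℝ) := by
      have := Nat.sub_one_lt_floor (1 + (1 - 2 * ℓ) / ℓ)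
      linarith
    have : (1 - 2 * ℓ) < (⌊1 + (1 - 2 * ℓ) / ℓ⌋₊ : ℝ) * ℓ := by
      rw [div_lt_iff₀ hℓ0] at hfloor; linarith
    rw [h2]; linarith
end

section
/- Let ℓ ∈ (0,1/2), s(f) = min{ℓ, f, 1−f}, w ∈ (0,1/2), and consider two coupled bold-play chains X_k, Y_k driven by the same sequence of wins/losses, started at f₁ ≥ f₂ respectively (both move up by s(·) on a win and down by s(·) on a loss). Then X_k ≥ Y_k for all k, and X_k − Y_k ≤ 2^k (f₁ − f₂) for all k. -/
lemma boldStake_lipschitz (ℓ x y : ℝ) :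
    |boldStake ℓ x - boldStake ℓ y| ≤ |x - y| := by
  unfold boldStake
  calc |min ℓ (min x (1-x)) - min ℓ (min y (1-y))|
      ≤ max |ℓ - ℓ| |min x (1-x) - min y (1-y)| := abs_min_sub_min_le_max _ _ _ _
    _ ≤ |x - y| := by
        apply max_le
        · simp [abs_nonneg]
        · calc |min x (1-x) - min y (1-y)| ≤ max |x - y| |(1-x) - (1-y)| :=
                abs_min_sub_min_le_max _ _ _ _
            _ ≤ |x - y| := by
                apply max_le le_rfl
                have : (1-x) - (1-y) = -(x - y) := by ring
                rw [this, abs_neg]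

/-- Deterministic coupling: two bold-play gamblers driven by the same win/loss
sequence `ω` preserve their ordering, and their gap at time `k` is at most
`2^k` times the initial gap. -/
theorem stmt_15 (ℓ : ℝ) (hℓ0 : 0 < ℓ) (hℓ : ℓ < 1/2)
    (f₁ f₂ : ℝ) (h0 : 0 ≤ f₂) (h12 : f₂ ≤ f₁) (h1 : f₁ ≤ 1)
    (ω : ℕ → Bool) (X Y : ℕ → ℝ)
    (hX0 : X 0 = f₁) (hY0 : Y 0 = f₂)
    (hX : ∀ k, X (k+1) = if ω k then X k + boldStake ℓ (X k)
                          else X k - boldStake ℓ (X k))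
    (hY : ∀ k, Y (k+1) = if ω k then Y k + boldStake ℓ (Y k)
                          else Y k - boldStake ℓ (Y k)) :
    ∀ k, Y k ≤ X k ∧ X k - Y k ≤ 2 ^ k * (f₁ - f₂) := by
  intro k
  induction k with
  | zero => simp [hX0, hY0, h12]
  | succ k ih =>
    obtain ⟨hle, hgap⟩ := ih
    have hlip := boldStake_lipschitz ℓ (X k) (Y k)
    rw [abs_sub_le_iff] at hlip
    have habs : |X k - Y k| = X k - Y k := abs_of_nonneg (by linarith)
    rw [habs] at hlip
    obtain ⟨h1', h2'⟩ := hlip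
    have hdouble : X k - Y k ≤ 2 ^ k * (f₁ - f₂) := hgap
    have hp : (2:ℝ) ^ (k+1) * (f₁ - f₂) = 2 * (2 ^ k * (f₁ - f₂)) := by ring
    rw [hX k, hY k, hp]
    cases hω : ω k
    · simp only [Bool.false_eq_true, if_false]
      exact ⟨by linarith, by linarith⟩
    · simp only [if_true]
      exact ⟨by linarith, by linarith⟩
end

section
/- Let ℓ ∈ (0,1/2), w ∈ (0,1/2), and let Q : [0,1] → [0,1] satisfy the bold-play recursion Q(f) = w Q(f + s(f)) + (1−w) Q(f − s(f)) with Q(0)=0, Q(1)=1, where s(f) = min{ℓ,f,1−f}. Suppose Q is nondecreasing. Let f₀ ∈ (ℓ, 1−ℓ) and suppose there exist constants C > 0, δ > 0 such that for all ε ∈ (0, δ): (i) Q(f₀ − ℓ) − Q(f₀ − ℓ − ε) ≥ C(1−w)^{−log₂ ε}, and (ii) Q(f₀ + ℓ) − Q(f₀ + ℓ − 2ε) ≤ C(1−w)·(1−w)^{−log₂(2ε)}. Then for sufficiently small ε > 0, setting f = f₀ − ε, one has w Q(f + ℓ − ε) + (1−w) Q(f − ℓ + ε) > Q(f). -/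
open Real

/-- Deriving Theorem 1 from Proposition 1: if `Q` satisfies the bold-play recursion,
is nondecreasing, and the difference estimates (i) and (ii) hold near `f₀ - ℓ ∈ S`
and `f₀ + ℓ ∉ S`, then for sufficiently small `ε`, starting from `f = f₀ - ε` it is
strictly better to stake `ℓ - ε` than to stake boldly. -/
theorem stmt_16 (ℓ w : ℝ) (hℓ0 : 0 < ℓ) (hℓ : ℓ < 1/2) (hw0 : 0 < w) (hw : w < 1/2)
    (Q : ℝ → ℝ)
    (hQrange : ∀ f ∈ Set.Icc (0:ℝ) 1, Q f ∈ Set.Icc (0:ℝ) 1)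
    (hQ0 : Q 0 = 0) (hQ1 : Q 1 = 1)
    (hQmono : MonotoneOn Q (Set.Icc (0:ℝ) 1))
    (hrec : ∀ f ∈ Set.Ioo (0:ℝ) 1,
      Q f = w * Q (f + boldStake ℓ f) + (1 - w) * Q (f - boldStake ℓ f))
    (f₀ : ℝ) (hf₀ : f₀ ∈ Set.Ioo ℓ (1 - ℓ))
    (C δ : ℝ) (hC : 0 < C) (hδ : 0 < δ)
    (hi : ∀ ε : ℝ, 0 < ε → ε < δ →
      Q (f₀ - ℓ) - Q (f₀ - ℓ - ε) ≥ C * (1 - w) ^ (-Real.logb 2 ε))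
    (hii : ∀ ε : ℝ, 0 < ε → ε < δ →
      Q (f₀ + ℓ) - Q (f₀ + ℓ - 2 * ε) ≤
        C * (1 - w) * (1 - w) ^ (-Real.logb 2 (2 * ε))) :
    ∃ ε₀ > 0, ∀ ε : ℝ, 0 < ε → ε < ε₀ →
      w * Q ((f₀ - ε) + ℓ - ε) + (1 - w) * Q ((f₀ - ε) - ℓ + ε) > Q (f₀ - ε) := by
  obtain ⟨hf₀l, hf₀r⟩ := hf₀
  have hw1 : 0 < 1 - w := by linarith
  refine ⟨min δ (min (f₀ - ℓ) ℓ), lt_min hδ (lt_min (by linarith) hℓ0), ?_⟩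
  intro ε hε hεlt
  have hε1 : ε < δ := lt_of_lt_of_le hεlt (min_le_left _ _)
  have hε2 : ε < f₀ - ℓ := lt_of_lt_of_le hεlt ((min_le_right _ _).trans (min_le_left _ _))
  have hε3 : ε < ℓ := lt_of_lt_of_le hεlt ((min_le_right _ _).trans (min_le_right _ _))
  -- bold stake at f₀ - ε is ℓ
  have hstake : boldStake ℓ (f₀ - ε) = ℓ := by
    unfold boldStake
    rw [min_eq_left (le_min (by linarith) (by linarith))]
  have hfrec := hrec (f₀ - ε) ⟨by linarith, by linarith⟩
  rw [hstake, show f₀ - ε + ℓ = f₀ + ℓ - ε from by ring,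
    show f₀ - ε - ℓ = f₀ - ℓ - ε from by ring] at hfrec
  have e1 : (f₀ - ε) + ℓ - ε = f₀ + ℓ - 2 * ε := by ring
  have e2 : (f₀ - ε) - ℓ + ε = f₀ - ℓ := by ring
  rw [e1, e2, hfrec]
  -- rewrite the rpow identity
  set A : ℝ := (1 - w) ^ (-Real.logb 2 ε) with hAdef
  have hA : 0 < A := Real.rpow_pos_of_pos hw1 _
  have hlog : Real.logb 2 (2 * ε) = 1 + Real.logb 2 ε := by
    rw [Real.logb_mul two_ne_zero (ne_of_gt hε), Real.logb_self_eq_one] <;> norm_num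
  have hpow : C * (1 - w) * (1 - w) ^ (-Real.logb 2 (2 * ε)) = C * A := by
    rw [hlog, hAdef, neg_add, Real.rpow_add hw1, Real.rpow_neg_one]
    field_simp
  have h1 : Q (f₀ - ℓ) - Q (f₀ - ℓ - ε) ≥ C * A := hi ε hε hε1
  have h2 : Q (f₀ + ℓ) - Q (f₀ + ℓ - 2 * ε) ≤ C * A := by
    have := hii ε hε hε1
    rwa [hpow] at this
  have h3 : Q (f₀ + ℓ - ε) ≤ Q (f₀ + ℓ) := by
    apply hQmono ⟨by linarith, by linarith⟩ ⟨by linarith, by linarith⟩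
    linarith
  have hCA : 0 < C * A := mul_pos hC hA
  nlinarith [mul_le_mul_of_nonneg_left h1.le (le_of_lt hw1),
    mul_le_mul_of_nonneg_left (sub_le_sub_right h3 (Q (f₀ + ℓ - 2 * ε))) hw0.le,
    mul_le_mul_of_nonneg_left h2 hw0.le,
    mul_lt_mul_of_pos_right (show w < 1 - w by linarith) hCA]
end

section
/- Fix 0 < w < 1/2 and ℓ ∈ (0, 1/2), let L = ⌊1 + (1−2ℓ)/ℓ⌋, let g(x) = w(1+x)^{−log₂(1−w)} + (1−w)(1−x)^{−log₂(1−w)}, and set α = 1 − (1 − g(1/2))(1−w)^{2L}. Then 0 < α < 1. -/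
open Real

theorem stmt_18 (w ℓ : ℝ) (hw0 : 0 < w) (hw : w < 1/2) (hℓ0 : 0 < ℓ) (hℓ : ℓ < 1/2) :
    0 < 1 - (1 - gFun w (1/2)) * (1 - w) ^ (2 * ⌊1 + (1 - 2 * ℓ) / ℓ⌋₊) ∧
    1 - (1 - gFun w (1/2)) * (1 - w) ^ (2 * ⌊1 + (1 - 2 * ℓ) / ℓ⌋₊) < 1 := by
  set t : ℝ := -Real.logb 2 (1 - w) with ht
  have h1w0 : (0:ℝ) < 1 - w := by linarith
  have h1w1 : 1 - w < 1 := by linarith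
  have hlog : Real.logb 2 (1 - w) < 0 := Real.logb_neg (by norm_num) h1w0 h1w1
  have ht0 : 0 < t := by simp [ht]; linarith
  have ht1 : t < 1 := by
    have h : (-1 : ℝ) < Real.logb 2 (1 - w) := by
      rw [Real.lt_logb_iff_rpow_lt (by norm_num) h1w0, Real.rpow_neg_one]
      norm_num; linarith
    simp [ht]; linarith
  have hhalf : ((1:ℝ)/2) ^ t = 1 - w := by
    have h2 : ((2:ℝ)) ^ (-t) = 1 - w := by
      rw [ht, neg_neg]
      exact Real.rpow_logb (by norm_num) (by norm_num) h1w0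
    rw [one_div, Real.inv_rpow (by norm_num), ← Real.rpow_neg (by norm_num)]
    exact h2
  have h32 : ((3:ℝ)/2) ^ t < 3/2 := by
    calc ((3:ℝ)/2) ^ t < (3/2) ^ (1:ℝ) :=
          Real.rpow_lt_rpow_of_exponent_lt (by norm_num) ht1
      _ = 3/2 := Real.rpow_one _
  have hgval : gFun w (1/2) = w * ((3:ℝ)/2) ^ t + (1 - w) * (1 - w) := by
    unfold gFun
    rw [← ht]
    norm_num [hhalf]
  have h32pos : (0:ℝ) < ((3:ℝ)/2) ^ t := Real.rpow_pos_of_pos (by norm_num) _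
  have hg0 : 0 < gFun w (1/2) := by
    rw [hgval]
    have := mul_pos hw0 h32pos
    nlinarith
  have hg1 : gFun w (1/2) < 1 := by
    rw [hgval]
    nlinarith
  set P : ℝ := (1 - w) ^ (2 * ⌊1 + (1 - 2 * ℓ) / ℓ⌋₊) with hP
  have hP0 : 0 < P := pow_pos h1w0 _
  have hP1 : P ≤ 1 := pow_le_one₀ (by linarith) (by linarith)
  constructor
  · nlinarith [mul_pos hg0 hP0]
  · nlinarith [mul_pos (by linarith : (0:ℝ) < 1 - gFun w (1/2)) hP0]
end
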